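/- Let m ≥ 38 be an even integer, let G be a graph attaining the maximum spectral radius among all H(4,3)-free graphs with m edges and no isolated vertices, let x be a positive eigenvector of the adjacency matrix of G corresponding to ρ(G), and let u* be a vertex at which x attains its maximum entry. Then at least one neighbor of u* has a neighbor inside N(u*); equivalently, the subgraph of G induced by N(u*) contains an edge. -/

import Mathlib

open SimpleGraph Matrix

/-- `H` occurs as a subgraph of `G`: an injective map sending adjacent vertices to
adjacent vertices. -/
def ContainsSub {α β : Type*} (H : SimpleGraph α) (G : SimpleGraph β) : Prop :=
  ∃ f : α → β, Function.Injective f ∧ ∀ ⦃a b⦄, H.Adj a b → G.Adj (f a) (f b)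

/-- The graph `H(4,3)`: a 4-cycle `0-1-2-3-0` and a triangle `0-4-5-0`
sharing the common vertex `0`. -/
def H43 : SimpleGraph (Fin 6) :=
  SimpleGraph.fromEdgeSet {s(0,1), s(1,2), s(2,3), s(3,0), s(0,4), s(4,5), s(5,0)}

/-- `G` is `H(4,3)`-free. -/
def H43Free {β : Type*} (G : SimpleGraph β) : Prop := ¬ ContainsSub H43 G

open Classical in
/-- The real adjacency matrix of a simple graph. -/
noncomputable def adjMat {V : Type*} (G : SimpleGraph V) : Matrix V V ℝ :=
  fun i j => if G.Adj i j then 1 else 0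

/-- The spectral radius of a finite simple graph: the largest eigenvalue of its
adjacency matrix. -/
noncomputable def specRad {V : Type*} [Fintype V] (G : SimpleGraph V) : ℝ :=
  sSup {t : ℝ | ∃ x : V → ℝ, x ≠ 0 ∧ (adjMat G).mulVec x = t • x}

/-- `S_{n,2} = K₂ ∨ (n-2)K₁`: vertices `0` and `1` are adjacent to everything. -/
def Sgraph (n : ℕ) : SimpleGraph (Fin n) where
  Adj i j := i ≠ j ∧ (i.val < 2 ∨ j.val < 2)
  symm := by constructor; rintro i j ⟨h1, h2⟩; exact ⟨h1.symm, h2.symm⟩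
  loopless := by constructor; rintro i ⟨h1, _⟩; exact h1 rfl

/-- `S⁻_{n,2}`: the graph `S_{n,2}` with the edge `{1,2}` (an edge incident to a
vertex of degree two) deleted. -/
def SgraphMinus (n : ℕ) : SimpleGraph (Fin n) where
  Adj i j := i ≠ j ∧ (i.val < 2 ∨ j.val < 2) ∧
    ¬(i.val = 1 ∧ j.val = 2) ∧ ¬(i.val = 2 ∧ j.val = 1)
  symm := by
    constructor
    rintro i j ⟨h1, h2, h3, h4⟩
    exact ⟨h1.symm, h2.symm, fun hc => h4 ⟨hc.2, hc.1⟩, fun hc => h3 ⟨hc.2, hc.1⟩⟩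
  loopless := by constructor; rintro i ⟨h1, _⟩; exact h1 rfl

/-- The graph obtained from `S_{k,2}` (on vertices `0,…,k-1`, with `0,1` dominating)
by joining the maximum degree vertex `0` to `l` new vertices `k,…,k+l-1`. -/
def Fgraph (k l : ℕ) : SimpleGraph (Fin (k + l)) where
  Adj i j := i ≠ j ∧ (i.val = 0 ∨ j.val = 0 ∨
    (i.val < k ∧ j.val < k ∧ (i.val = 1 ∨ j.val = 1)))
  symm := by
    constructor
    rintro i j ⟨h1, h2⟩
    refine ⟨h1.symm, ?_⟩
    rcases h2 with h | h | ⟨ha, hb, hc⟩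
    · exact Or.inr (Or.inl h)
    · exact Or.inl h
    · exact Or.inr (Or.inr ⟨hb, ha, hc.symm⟩)
  loopless := by constructor; rintro i ⟨h1, _⟩; exact h1 rfl

/-- The star `K_{1,t}` with center `0`. -/
def starG (t : ℕ) : SimpleGraph (Fin (t + 1)) where
  Adj i j := i ≠ j ∧ (i.val = 0 ∨ j.val = 0)
  symm := by constructor; rintro i j ⟨h1, h2⟩; exact ⟨h1.symm, h2.symm⟩
  loopless := by constructor; rintro i ⟨h1, _⟩; exact h1 rfl

/-- `e(S)`: the number of edges of `G` with both endpoints in `S`. -/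
noncomputable def eIn {V : Type*} (G : SimpleGraph V) (S : Set V) : ℕ :=
  {e ∈ G.edgeSet | ∀ v ∈ e, v ∈ S}.ncard

/-- `e(S,T)`: the number of edges of `G` with one endpoint in `S` and the other in `T`. -/
noncomputable def eBetween {V : Type*} (G : SimpleGraph V) (S T : Set V) : ℕ :=
  {e ∈ G.edgeSet | ∃ a ∈ S, ∃ b ∈ T, e = s(a, b)}.ncard

/-- `G` attains the maximum spectral radius among all `H(4,3)`-free graphs with `m`
edges and no isolated vertices. -/
def IsExtremal (m : ℕ) {V : Type*} [Fintype V] (G : SimpleGraph V) : Prop :=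
  H43Free G ∧ G.edgeSet.ncard = m ∧ (∀ v : V, ∃ w, G.Adj v w) ∧
    ∀ (n : ℕ) (G' : SimpleGraph (Fin n)), H43Free G' → G'.edgeSet.ncard = m →
      (∀ v, ∃ w, G'.Adj v w) → specRad G' ≤ specRad G

/-!
If the neighbourhood of `u` were independent, the edges at the neighbours of `u` would be pairwise
distinct, so counting walks of length two from `u` would give
`ρ² x_u = ∑_{v ∼ u} ∑_{w ∼ v} x_w ≤ ∑_{v ∼ u} d(v) x_u ≤ m x_u`, i.e. `ρ² ≤ m`.
On the other hand, for `m = 2k + 2` the book `K₂ ∨ kK₁` together with a disjoint edge is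
`H(4,3)`-free (its two spine vertices cover every edge at a vertex of degree at least two) and has
the eigenvalue `(1 + √(8k+1))/2`, whose square exceeds `m`; extremality then forces `ρ² > m`.
-/

section Spectral

variable {V W : Type*} [Fintype V] [Fintype W]

lemma adjMat_mulVec_apply (G : SimpleGraph V) [DecidableRel G.Adj] (x : V → ℝ) (v : V) :
    (adjMat G *ᵥ x) v = ∑ w ∈ G.neighborFinset v, x w := by
  simp [adjMat, mulVec, dotProduct, neighborFinset_eq_filter, Finset.sum_filter]

lemma bddAbove_eigenvalues (G : SimpleGraph V) :
    BddAbove {t : ℝ | ∃ x : V → ℝ, x ≠ 0 ∧ adjMat G *ᵥ x = t • x} := by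
  classical
  refine ⟨Fintype.card V, ?_⟩
  rintro t ⟨x, hx, hxt⟩
  obtain ⟨v₀, hv₀⟩ := Function.ne_iff.mp hx
  have : Nonempty V := ⟨v₀⟩
  obtain ⟨v, hv⟩ := Finite.exists_max fun v ↦ |x v|
  have hpos : 0 < |x v| := (abs_pos.2 hv₀).trans_le (hv v₀)
  refine le_of_mul_le_mul_right ?_ hpos
  calc t * |x v| ≤ |t * x v| := by rw [abs_mul]; gcongr; exact le_abs_self t
    _ = |∑ w ∈ G.neighborFinset v, x w| := by
      rw [← adjMat_mulVec_apply, hxt, Pi.smul_apply, smul_eq_mul]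
    _ ≤ ∑ w ∈ G.neighborFinset v, |x v| :=
      (Finset.abs_sum_le_sum_abs _ _).trans (Finset.sum_le_sum fun w _ ↦ hv w)
    _ = G.degree v * |x v| := by simp [card_neighborFinset_eq_degree]
    _ ≤ Fintype.card V * |x v| := by gcongr; exact_mod_cast (G.degree_lt_card_verts v).le

lemma le_specRad_of_mulVec_eq {G : SimpleGraph V} {x : V → ℝ} {t : ℝ} (hx : x ≠ 0)
    (h : adjMat G *ᵥ x = t • x) : t ≤ specRad G :=
  le_csSup (bddAbove_eigenvalues G) ⟨x, hx, h⟩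

lemma adjMat_mulVec_comp_iso {G : SimpleGraph V} {G' : SimpleGraph W} (e : G ≃g G')
    (x : V → ℝ) : adjMat G' *ᵥ (x ∘ e.symm) = (adjMat G *ᵥ x) ∘ e.symm := by
  have hsub : adjMat G' = (adjMat G).submatrix e.symm e.symm := by
    ext v w
    simp only [adjMat, submatrix_apply]
    rw [e.symm.map_adj_iff]
  ext v
  simp only [mulVec, dotProduct, Function.comp_apply, hsub, submatrix_apply]
  exact Fintype.sum_equiv e.symm.toEquiv _ _ fun w ↦ rfl

lemma le_specRad_of_iso {G : SimpleGraph V} {G' : SimpleGraph W} (e : G ≃g G') {x : V → ℝ}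
    {t : ℝ} (hx : x ≠ 0) (h : adjMat G *ᵥ x = t • x) : t ≤ specRad G' := by
  refine le_specRad_of_mulVec_eq (x := x ∘ e.symm) (fun h0 ↦ hx ?_) ?_
  · simpa [Function.comp_assoc] using congrArg (· ∘ e) h0
  · rw [adjMat_mulVec_comp_iso, h]; rfl

end Spectral

lemma h43_adj_iff (i j : Fin 6) : H43.Adj i j ↔ i ≠ j ∧ s(i, j) ∈
    ({s(0,1), s(1,2), s(2,3), s(3,0), s(0,4), s(4,5), s(5,0)} : Finset (Sym2 (Fin 6))) := by
  simp [H43, and_comm]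

instance : DecidableRel H43.Adj := fun i j ↦ decidable_of_iff _ (h43_adj_iff i j).symm

/-- `H(4,3)` has no vertex cover of size two, and an uncovered edge `ij` can be chosen with a
second edge at `i`. -/
lemma h43_exists_adj_adj_avoiding (p q : Fin 6) :
    ∃ i j l, H43.Adj i j ∧ H43.Adj i l ∧ j ≠ l ∧ i ≠ p ∧ i ≠ q ∧ j ≠ p ∧ j ≠ q := by
  revert p q; decide

lemma h43Free_of_forall_adj {β : Type*} {G : SimpleGraph β} (p q : β)
    (h : ∀ a b, G.Adj a b → a = p ∨ a = q ∨ b = p ∨ b = q ∨ ∀ c, G.Adj a c → c = b) :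
    H43Free G := by
  rintro ⟨f, hf, hadj⟩
  have preimage (r : β) : ∃ i₀, ∀ i, f i = r → i = i₀ := by
    by_cases hr : ∃ i, f i = r
    · obtain ⟨i₀, rfl⟩ := hr
      exact ⟨i₀, fun i hi ↦ hf hi⟩
    · exact ⟨0, fun i hi ↦ (hr ⟨i, hi⟩).elim⟩
  obtain ⟨p₀, hp⟩ := preimage p
  obtain ⟨q₀, hq⟩ := preimage q
  obtain ⟨i, j, l, hij, hil, hjl, hip, hiq, hjp, hjq⟩ := h43_exists_adj_adj_avoiding p₀ q₀
  rcases h _ _ (hadj hij) with h' | h' | h' | h' | h'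
  · exact hip (hp i h')
  · exact hiq (hq i h')
  · exact hjp (hp j h')
  · exact hjq (hq j h')
  · exact hjl (hf (h' _ (hadj hil))).symm

lemma IsExtremal.le_specRad_of_mulVec_eq {m : ℕ} {V W : Type*} [Fintype V] [Fintype W]
    {G : SimpleGraph V} (hG : IsExtremal m G) {H : SimpleGraph W} (hH : H43Free H)
    (hHm : H.edgeSet.ncard = m) (hHiso : ∀ v, ∃ w, H.Adj v w) {x : W → ℝ} {t : ℝ} (hx : x ≠ 0)
    (hxt : adjMat H *ᵥ x = t • x) : t ≤ specRad G := by
  let e := Iso.map (Fintype.equivFin W) H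
  refine le_trans ?_ (hG.2.2.2 _ (H.map (Fintype.equivFin W)) ?_ ?_ ?_)
  · exact le_specRad_of_iso e hx hxt
  · rintro ⟨f, hf, hadj⟩
    exact hH ⟨e.symm ∘ f, e.symm.injective.comp hf, fun a b hab ↦ e.symm.map_adj_iff.2 (hadj hab)⟩
  · rw [← hHm, ← Nat.card_coe_set_eq, ← Nat.card_coe_set_eq, Nat.card_congr e.mapEdgeSet]
  · intro v
    obtain ⟨w, hw⟩ := hHiso (e.symm v)
    exact ⟨e w, by simpa using e.map_adj_iff.2 hw⟩

lemma ncard_edgeSet_sum {V W : Type*} [Finite V] [Finite W] (G : SimpleGraph V)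
    (H : SimpleGraph W) : (G ⊕g H).edgeSet.ncard = G.edgeSet.ncard + H.edgeSet.ncard := by
  rw [← Nat.card_coe_set_eq, Nat.card_congr edgeSetSumEquiv, Nat.card_sum, Nat.card_coe_set_eq,
    Nat.card_coe_set_eq]

/-- The book `K₂ ∨ kK₁`, with spine `Fin 2` and pages `Fin k`. -/
def bookGraph (k : ℕ) : SimpleGraph (Fin 2 ⊕ Fin k) :=
  completeBipartiteGraph (Fin 2) (Fin k) ⊔ edge (.inl 0) (.inl 1)

namespace bookGraph

variable {k : ℕ}

@[simp] lemma adj_inl_inl {a b : Fin 2} : (bookGraph k).Adj (.inl a) (.inl b) ↔ a ≠ b := by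
  fin_cases a <;> fin_cases b <;> simp [bookGraph, edge_adj]

@[simp] lemma adj_inl_inr {a : Fin 2} {b : Fin k} : (bookGraph k).Adj (.inl a) (.inr b) := by
  simp [bookGraph]

@[simp] lemma adj_inr_inl {a : Fin k} {b : Fin 2} : (bookGraph k).Adj (.inr a) (.inl b) := by
  simp [bookGraph]

@[simp] lemma not_adj_inr_inr {a b : Fin k} : ¬ (bookGraph k).Adj (.inr a) (.inr b) := by
  simp [bookGraph, edge_adj]

lemma ncard_edgeSet (k : ℕ) : (bookGraph k).edgeSet.ncard = 2 * k + 1 := by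
  have hbip : (completeBipartiteGraph (Fin 2) (Fin k)).edgeSet.ncard = 2 * k := by
    simp [Set.ncard_def, encard_edgeSet_completeBipartiteGraph]
  rw [bookGraph, edgeSet_sup, edgeSet_edge_of_ne (by simp), Set.union_singleton,
    Set.ncard_insert_of_notMem (by simp) (Set.toFinite _), hbip]

end bookGraph

abbrev bookSumEdge (k : ℕ) : SimpleGraph ((Fin 2 ⊕ Fin k) ⊕ Fin 2) := bookGraph k ⊕g ⊤

lemma ncard_edgeSet_bookSumEdge (k : ℕ) : (bookSumEdge k).edgeSet.ncard = 2 * k + 2 := by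
  rw [ncard_edgeSet_sum, bookGraph.ncard_edgeSet, ← coe_edgeFinset, Set.ncard_coe_finset,
    card_edgeFinset_top_eq_card_choose_two]
  rfl

lemma bookSumEdge_forall_exists_adj (k : ℕ) : ∀ v, ∃ w, (bookSumEdge k).Adj v w := by
  rintro ((a | a) | a)
  · exact ⟨.inl (.inl (a + 1)), by simp⟩
  · exact ⟨.inl (.inl 0), by simp⟩
  · exact ⟨.inr (a + 1), by simp⟩

lemma h43Free_bookSumEdge (k : ℕ) : H43Free (bookSumEdge k) := by
  refine h43Free_of_forall_adj (.inl (.inl 0)) (.inl (.inl 1)) ?_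
  rintro ((a | a) | a) ((b | b) | b) hab <;>
    simp only [sum_adj, top_adj, bookGraph.adj_inl_inl, bookGraph.adj_inl_inr, bookGraph.adj_inr_inl,
      bookGraph.not_adj_inr_inr, Sum.inl.injEq, Sum.inr.injEq, reduceCtorEq, Sum.forall,
      Fin.forall_fin_two] at hab ⊢ <;>
    grind

open Classical in
lemma adjMat_bookSumEdge_mulVec {k : ℕ} {t : ℝ} (ht : t * t = t + 2 * k) :
    adjMat (bookSumEdge k) *ᵥ Sum.elim (Sum.elim (fun _ ↦ t) (fun _ ↦ 2)) 0
      = t • Sum.elim (Sum.elim (fun _ ↦ t) (fun _ ↦ 2)) 0 := by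
  ext ((a | a) | a) <;>
    simp only [adjMat_mulVec_apply, neighborFinset_eq_filter, Finset.sum_filter,
      Fintype.sum_sum_type, sum_adj, bookGraph.adj_inl_inl, bookGraph.adj_inl_inr,
      bookGraph.adj_inr_inl, bookGraph.not_adj_inr_inr, Sum.elim_inl, Sum.elim_inr, Pi.zero_apply,
      Fin.sum_univ_two, Finset.sum_const, Finset.card_univ, Fintype.card_fin, nsmul_eq_mul,
      if_true, if_false, ite_self, mul_zero, add_zero, Pi.smul_apply, smul_eq_mul]
  · have hspine : ∀ a : Fin 2, ((if a ≠ 0 then t else 0) + if a ≠ 1 then t else 0) = t :=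
      Fin.forall_fin_two.2 ⟨by simp, by simp⟩
    rw [hspine]
    linarith
  · push_cast
    ring

section NeighborhoodIndependent

variable {V : Type*} [Fintype V] {G : SimpleGraph V} [DecidableRel G.Adj] {u : V}

/-- The darts leaving `N(u)` are distinct edges when `N(u)` is independent. -/
lemma sum_degree_neighbor_le_card_edgeFinset
    (hind : ∀ a ∈ G.neighborSet u, ∀ b ∈ G.neighborSet u, ¬ G.Adj a b) :
    ∑ v ∈ G.neighborFinset u, G.degree v ≤ G.edgeFinset.card := by
  simp only [← card_neighborFinset_eq_degree]
  rw [← Finset.card_sigma]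
  refine Finset.card_le_card_of_injOn (fun p ↦ s(p.1, p.2)) (fun p hp ↦ ?_) ?_
  · simp only [Finset.mem_coe, Finset.mem_sigma, mem_neighborFinset] at hp
    simpa using hp.2
  · rintro ⟨a, b⟩ hab ⟨a', b'⟩ hab' h
    simp only [Finset.coe_sigma, Set.mem_sigma_iff, Finset.mem_coe, mem_neighborFinset] at hab hab'
    rcases Sym2.eq_iff.1 h with ⟨rfl, rfl⟩ | ⟨rfl, rfl⟩
    · rfl
    · exact (hind _ hab.1 _ hab'.1 hab.2).elim

lemma sq_le_card_edgeFinset_of_neighborSet_indep {x : V → ℝ} {t : ℝ}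
    (hxt : adjMat G *ᵥ x = t • x) (hu : 0 < x u) (hmax : ∀ v, x v ≤ x u)
    (hind : ∀ a ∈ G.neighborSet u, ∀ b ∈ G.neighborSet u, ¬ G.Adj a b) :
    t ^ 2 ≤ G.edgeFinset.card := by
  have hwalks : t ^ 2 * x u = ∑ v ∈ G.neighborFinset u, ∑ w ∈ G.neighborFinset v, x w := by
    have h : adjMat G *ᵥ (adjMat G *ᵥ x) = t ^ 2 • x := by
      rw [hxt, mulVec_smul, hxt, smul_smul, sq]
    simpa [adjMat_mulVec_apply] using (congrFun h u).symm
  refine le_of_mul_le_mul_right ?_ hu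
  calc t ^ 2 * x u ≤ ∑ v ∈ G.neighborFinset u, G.degree v * x u := by
        rw [hwalks]
        refine Finset.sum_le_sum fun v _ ↦ ?_
        rw [← card_neighborFinset_eq_degree, ← nsmul_eq_mul, ← Finset.sum_const]
        exact Finset.sum_le_sum fun w _ ↦ hmax w
    _ ≤ G.edgeFinset.card * x u := by
        rw [← Finset.sum_mul]
        gcongr
        exact_mod_cast sum_degree_neighbor_le_card_edgeFinset hind

end NeighborhoodIndependent

/-- The competitor is `bookSumEdge k`, with eigenvalue `(1 + √(8k+1))/2`, the positive root of
`t² = t + 2k`; its eigenvector is supported on the book. -/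
lemma IsExtremal.two_mul_add_two_lt_specRad_sq {k : ℕ} (hk : 2 ≤ k) {V : Type*} [Fintype V]
    {G : SimpleGraph V} (hG : IsExtremal (2 * k + 2) G) : (2 * k + 2 : ℝ) < specRad G ^ 2 := by
  set t : ℝ := (1 + √(8 * k + 1)) / 2 with ht_def
  have hsqrt : √(8 * k + 1) ^ 2 = 8 * k + 1 := Real.sq_sqrt (by positivity)
  have ht : t * t = t + 2 * k := by rw [ht_def]; linear_combination hsqrt / 4
  have ht2 : 2 < t := by
    have hk' : (2 : ℝ) ≤ k := by exact_mod_cast hk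
    have : (3 : ℝ) < √(8 * k + 1) := Real.lt_sqrt_of_sq_lt (by linarith)
    linarith
  have hle : t ≤ specRad G := by
    refine hG.le_specRad_of_mulVec_eq (h43Free_bookSumEdge k) (ncard_edgeSet_bookSumEdge k)
      (bookSumEdge_forall_exists_adj k) (fun h ↦ ?_) (adjMat_bookSumEdge_mulVec ht)
    have := congrFun h (.inl (.inl 0))
    simp only [Sum.elim_inl, Pi.zero_apply] at this
    linarith
  nlinarith

/-- For an extremal graph `G` (even `m ≥ 38`) with Perron vector `x`
maximized at `u`, the subgraph induced by `N(u)` contains an edge. -/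
theorem stmt10 {V : Type*} [Fintype V] (m : ℕ) (hm : 38 ≤ m) (hme : Even m)
    (G : SimpleGraph V) (hext : IsExtremal m G)
    (x : V → ℝ) (hxpos : ∀ v, 0 < x v)
    (heig : (adjMat G).mulVec x = specRad G • x)
    (u : V) (hmaxx : ∀ v, x v ≤ x u) :
    ∃ a ∈ G.neighborSet u, ∃ b ∈ G.neighborSet u, G.Adj a b := by
  classical
  by_contra hind
  push Not at hind
  obtain ⟨k, rfl⟩ : ∃ k, m = 2 * k + 2 := by
    obtain ⟨r, hr⟩ := hme
    exact ⟨r - 1, by omega⟩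
  have hlower := hext.two_mul_add_two_lt_specRad_sq (by omega)
  have hupper := sq_le_card_edgeFinset_of_neighborSet_indep heig (hxpos u) hmaxx hind
  have hcard : G.edgeFinset.card = 2 * k + 2 := by
    rw [← Set.ncard_coe_finset, coe_edgeFinset, hext.2.1]
  rw [hcard] at hupper
  push_cast at hupper
  linarith
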